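/- Given null metric hypersurface data {N,γ,ℓ,ℓ⁽²⁾} and any covector ω with ω(n) ≠ 0 everywhere and any function u, there exists a unique gauge element (z,ζ) with G_{(z,ζ)}(ℓ) = ω and G_{(z,ζ)}(ℓ⁽²⁾) = u; explicitly z = ω(n) and ζ = (1/ω(n))P(ω,·) + ((u − P(ω,ω))/(2ω(n)²)) n. -/

import Mathlib

/-!
Everything happens fibrewise, in a single tangent space. Evaluating `G(ℓ) = ω` on the radical
direction `n` (where `ℓ(n) = 1` and `γ(n,·) = 0`) forces `z = ω(n)`. Then `γ(ζ,·)` is forced,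
which fixes `ζ` up to a multiple `c n` of the radical; since `γ(ζ,ζ)` does not see that multiple
while `ℓ(ζ)` shifts by `c`, the equation `G(ℓ⁽²⁾) = u` forces `c`. For existence, the identity
`P γ + n ⊗ ℓ = id` gives `γ(P(ω,·),·) = ω - ω(n) ℓ`, so the first summand of `ζ` produces `ω`
and the coefficient of `n` is chosen to produce `u`.
-/

open Module LinearMap

variable {N : Type*} {T : N → Type*} [∀ p, AddCommGroup (T p)] [∀ p, Module ℝ (T p)]

/-- Gauge action on the covector field: `G_{(z,ζ)}(ℓ) = z(ℓ + γ(ζ,·))`. -/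
noncomputable def gaugeL (γ : ∀ p, T p →ₗ[ℝ] T p →ₗ[ℝ] ℝ) (z : N → ℝ) (ζ : ∀ p, T p)
    (ℓ : ∀ p, Dual ℝ (T p)) : ∀ p, Dual ℝ (T p) :=
  fun p ↦ z p • (ℓ p + γ p (ζ p))

/-- Gauge action on the scalar field: `G_{(z,ζ)}(ℓ⁽²⁾) = z²(ℓ⁽²⁾ + 2ℓ(ζ) + γ(ζ,ζ))`. -/
noncomputable def gaugeL2 (γ : ∀ p, T p →ₗ[ℝ] T p →ₗ[ℝ] ℝ) (z : N → ℝ) (ζ : ∀ p, T p)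
    (ℓ : ∀ p, Dual ℝ (T p)) (l2 : N → ℝ) : N → ℝ :=
  fun p ↦ (z p) ^ 2 * (l2 p + 2 * ℓ p (ζ p) + γ p (ζ p) (ζ p))

section Fibre

variable {V : Type*} [AddCommGroup V] [Module ℝ V]
  {γ : V →ₗ[ℝ] V →ₗ[ℝ] ℝ} {ℓ : Dual ℝ V} {l2 : ℝ} {n : V} {P : Dual ℝ V →ₗ[ℝ] V}

noncomputable def gaugeFixingShift (P : Dual ℝ V →ₗ[ℝ] V) (n : V) (ω : Dual ℝ V) (u : ℝ) : V :=
  (ω n)⁻¹ • P ω + ((u - ω (P ω)) / (2 * ω n ^ 2)) • n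

theorem gamma_P_apply (hγsym : ∀ x y, γ x y = γ y x)
    (hPsym : ∀ ω χ : Dual ℝ V, ω (P χ) = χ (P ω)) (hPγ : ∀ x, P (γ x) + ℓ x • n = x)
    (χ : Dual ℝ V) (x : V) : γ (P χ) x = χ x - ℓ x * χ n := by
  have h := congrArg χ (hPγ x)
  rw [map_add, map_smul, smul_eq_mul] at h
  rw [hγsym, hPsym]
  linarith

theorem ell_P_apply (hPsym : ∀ ω χ : Dual ℝ V, ω (P χ) = χ (P ω))
    (hPℓ : P ℓ + l2 • n = 0) (χ : Dual ℝ V) : ℓ (P χ) = -(l2 * χ n) := by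
  rw [hPsym, eq_neg_of_add_eq_zero_left hPℓ, map_neg, map_smul, smul_eq_mul]

theorem gamma_gaugeFixingShift_apply (hγsym : ∀ x y, γ x y = γ y x)
    (hPsym : ∀ ω χ : Dual ℝ V, ω (P χ) = χ (P ω)) (hPγ : ∀ x, P (γ x) + ℓ x • n = x)
    (hγn : γ n = 0) (ω : Dual ℝ V) (u : ℝ) (x : V) :
    γ (gaugeFixingShift P n ω u) x = (ω n)⁻¹ * (ω x - ℓ x * ω n) := by
  simp [gaugeFixingShift, hγn, gamma_P_apply hγsym hPsym hPγ]

theorem smul_add_gamma_gaugeFixingShift (hγsym : ∀ x y, γ x y = γ y x)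
    (hPsym : ∀ ω χ : Dual ℝ V, ω (P χ) = χ (P ω)) (hPγ : ∀ x, P (γ x) + ℓ x • n = x)
    (hγn : γ n = 0) {ω : Dual ℝ V} (hω : ω n ≠ 0) (u : ℝ) :
    ω n • (ℓ + γ (gaugeFixingShift P n ω u)) = ω := by
  ext x
  simp only [LinearMap.smul_apply, LinearMap.add_apply, smul_eq_mul,
    gamma_gaugeFixingShift_apply hγsym hPsym hPγ hγn]
  field_simp
  ring

theorem sq_mul_gaugeFixingShift (hγsym : ∀ x y, γ x y = γ y x)
    (hPsym : ∀ ω χ : Dual ℝ V, ω (P χ) = χ (P ω)) (hPγ : ∀ x, P (γ x) + ℓ x • n = x)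
    (hγn : γ n = 0) (hPℓ : P ℓ + l2 • n = 0) (hℓn : ℓ n = 1)
    {ω : Dual ℝ V} (hω : ω n ≠ 0) (u : ℝ) :
    ω n ^ 2 * (l2 + 2 * ℓ (gaugeFixingShift P n ω u)
      + γ (gaugeFixingShift P n ω u) (gaugeFixingShift P n ω u)) = u := by
  have hℓζ : ℓ (gaugeFixingShift P n ω u) = -l2 + (u - ω (P ω)) / (2 * ω n ^ 2) := by
    simp only [gaugeFixingShift, map_add, map_smul, ell_P_apply hPsym hPℓ, hℓn, smul_eq_mul]
    field_simp
  rw [gamma_gaugeFixingShift_apply hγsym hPsym hPγ hγn, hℓζ]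
  simp only [gaugeFixingShift, map_add, map_smul, smul_eq_mul]
  field_simp
  ring

theorem eq_apply_of_smul_add_gamma_eq (hγsym : ∀ x y, γ x y = γ y x) (hγn : γ n = 0)
    (hℓn : ℓ n = 1) {z : ℝ} {ζ : V} {ω : Dual ℝ V}
    (h : z • (ℓ + γ ζ) = ω) : z = ω n := by
  rw [← h, LinearMap.smul_apply, LinearMap.add_apply, hγsym, hγn, hℓn]
  simp

theorem eq_of_gamma_eq_of_two_mul_ell_add_gamma_eq (hγsym : ∀ x y, γ x y = γ y x)
    (hℓn : ℓ n = 1) (hrad : ∀ x, γ x = 0 → ∃ c : ℝ, x = c • n) {ζ ζ' : V}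
    (hγ : γ ζ = γ ζ') (hq : 2 * ℓ ζ + γ ζ ζ = 2 * ℓ ζ' + γ ζ' ζ') : ζ = ζ' := by
  obtain ⟨c, hc⟩ := hrad (ζ - ζ') (by rw [map_sub, hγ, sub_self])
  have hquad : γ ζ ζ = γ ζ' ζ' := by rw [hγ, hγsym, hγ]
  have hc0 : c = 0 := by
    have h := congrArg ℓ hc
    rw [map_sub, map_smul, hℓn, smul_eq_mul, mul_one] at h
    linarith
  rwa [hc0, zero_smul, sub_eq_zero] at hc

end Fibre

/-- Gauge fixing: given null metric hypersurface data `{N,γ,ℓ,ℓ⁽²⁾}` (with associated `n`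
and `P`), a covector field `ω` with `ω(n) ≠ 0` everywhere and a function `u`, there is a
unique gauge element `(z,ζ)` with `G_{(z,ζ)}(ℓ) = ω` and `G_{(z,ζ)}(ℓ⁽²⁾) = u`; it is
given by `z = ω(n)` and `ζ = ω(n)⁻¹ P(ω,·) + ((u - P(ω,ω))/(2ω(n)²)) n`. -/
theorem gauge_fixing
    (γ : ∀ p, T p →ₗ[ℝ] T p →ₗ[ℝ] ℝ)
    (hγsym : ∀ p (x y : T p), γ p x y = γ p y x)
    (ℓ : ∀ p, Dual ℝ (T p)) (l2 : N → ℝ)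
    (n : ∀ p, T p) (P : ∀ p, Dual ℝ (T p) →ₗ[ℝ] T p)
    (hγn : ∀ p, γ p (n p) = 0)
    (hℓn : ∀ p, ℓ p (n p) = 1)
    (hrad : ∀ p (x : T p), γ p x = 0 → ∃ c : ℝ, x = c • n p)
    (hPsym : ∀ p (ω χ : Dual ℝ (T p)), ω (P p χ) = χ (P p ω))
    (hPℓ : ∀ p, P p (ℓ p) + l2 p • n p = 0)
    (hPγ : ∀ p (x : T p), P p (γ p x) + ℓ p x • n p = x)
    (ω : ∀ p, Dual ℝ (T p)) (hω : ∀ p, ω p (n p) ≠ 0) (u : N → ℝ)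
    (z₀ : N → ℝ) (hz₀ : z₀ = fun p ↦ ω p (n p))
    (ζ₀ : ∀ p, T p)
    (hζ₀ : ζ₀ = fun p ↦ (ω p (n p))⁻¹ • P p (ω p)
      + ((u p - ω p (P p (ω p))) / (2 * (ω p (n p)) ^ 2)) • n p) :
    ((∀ p, z₀ p ≠ 0) ∧ gaugeL γ z₀ ζ₀ ℓ = ω ∧ gaugeL2 γ z₀ ζ₀ ℓ l2 = u) ∧
    (∀ (z : N → ℝ) (ζ : ∀ p, T p), (∀ p, z p ≠ 0) →
      gaugeL γ z ζ ℓ = ω → gaugeL2 γ z ζ ℓ l2 = u → z = z₀ ∧ ζ = ζ₀) := by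
  have hL : gaugeL γ z₀ ζ₀ ℓ = ω := by
    subst hz₀ hζ₀
    exact funext fun p ↦ smul_add_gamma_gaugeFixingShift (hγsym p) (hPsym p) (hPγ p) (hγn p)
      (hω p) (u p)
  have hL2 : gaugeL2 γ z₀ ζ₀ ℓ l2 = u := by
    subst hz₀ hζ₀
    exact funext fun p ↦ sq_mul_gaugeFixingShift (hγsym p) (hPsym p) (hPγ p) (hγn p) (hPℓ p)
      (hℓn p) (hω p) (u p)
  have hz₀ω : ∀ p, z₀ p ≠ 0 := by simpa [hz₀] using hω
  refine ⟨⟨hz₀ω, hL, hL2⟩, fun z ζ _ h1 h2 ↦ ?_⟩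
  obtain rfl : z = z₀ := funext fun p ↦ (eq_apply_of_smul_add_gamma_eq (hγsym p) (hγn p)
      (hℓn p) (congrFun h1 p)).trans (congrFun hz₀ p).symm
  refine ⟨rfl, funext fun p ↦
    eq_of_gamma_eq_of_two_mul_ell_add_gamma_eq (hγsym p) (hℓn p) (hrad p) ?_ ?_⟩
  · have h := (congrFun h1 p).trans (congrFun hL p).symm
    exact add_left_cancel (smul_right_injective _ (hz₀ω p) h)
  · have h := (congrFun h2 p).trans (congrFun hL2 p).symm
    linarith [mul_left_cancel₀ (pow_ne_zero 2 (hz₀ω p)) h]
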